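/- Let V be a totally real subspace of ℂ^n, i.e. ⟨Jv, w⟩ = 0 for all v, w ∈ V, and let B : V → V be a surjective real-linear isometry of V. Then there exists a complex-linear isometric automorphism A of ℂ^n such that A(V) = V and A v = B v for every v ∈ V. -/

import Mathlib

/-!
Since `⟨J v, w⟩ = Im ⟪v, w⟫`, the Hermitian product is real on a totally real subspace `V`.
Hence a real orthonormal basis `(bᵢ)` of `V` and its image `(B bᵢ)` are both `ℂ`-orthonormal.
Two `ℂ`-orthonormal families with the same index set are related by a unitary map, obtained by
extending both to orthonormal bases of `ℂ^n`; being `ℝ`-linear, that unitary agrees with `B`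
on `V`.
-/

noncomputable section

/-- `ℂ^n` as a Euclidean space. -/
abbrev En (n : ℕ) : Type := EuclideanSpace ℂ (Fin n)

/-- The complex structure `J`, multiplication by `i`. -/
def Jc {n : ℕ} (x : En n) : En n := Complex.I • x

open Module

section Orthonormal

variable {𝕜 E ι κ : Type*} [RCLike 𝕜] [NormedAddCommGroup E] [InnerProductSpace 𝕜 E]
  [FiniteDimensional 𝕜 E]

theorem Orthonormal.exists_orthonormalBasis_apply_embedding [Fintype κ]
    (hκ : finrank 𝕜 E = Fintype.card κ) {v : ι → E} (hv : Orthonormal 𝕜 v)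
    (e : ι ↪ κ) :
    ∃ b : OrthonormalBasis κ 𝕜 E, ∀ i, b (e i) = v i := by
  classical
  have hv' : Orthonormal 𝕜 ((Set.range e).domRestrict (Function.extend e v 0)) := by
    convert hv.comp _ (Equiv.ofInjective e e.injective).symm.injective using 1
    ext ⟨_, i, rfl⟩
    simp [e.injective.extend_apply]
  obtain ⟨b, hb⟩ := hv'.exists_orthonormalBasis_extension_of_card_eq hκ
  exact ⟨b, fun i => (hb _ ⟨i, rfl⟩).trans (e.injective.extend_apply _ _ _)⟩

theorem Orthonormal.exists_linearIsometryEquiv_apply_eq [Fintype ι] {v w : ι → E}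
    (hv : Orthonormal 𝕜 v) (hw : Orthonormal 𝕜 w) :
    ∃ A : E ≃ₗᵢ[𝕜] E, ∀ i, A (v i) = w i := by
  have hcard : Fintype.card ι ≤ Fintype.card (Fin (finrank 𝕜 E)) := by
    simpa using hv.linearIndependent.fintype_card_le_finrank
  obtain ⟨e⟩ := Function.Embedding.nonempty_of_card_le hcard
  have hE : finrank 𝕜 E = Fintype.card (Fin (finrank 𝕜 E)) := (Fintype.card_fin _).symm
  obtain ⟨b, hb⟩ := hv.exists_orthonormalBasis_apply_embedding hE e
  obtain ⟨b', hb'⟩ := hw.exists_orthonormalBasis_apply_embedding hE e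
  exact ⟨b.equiv b' (.refl _), fun i => by rw [← hb, ← hb', b.equiv_apply_basis]; rfl⟩

end Orthonormal

section TotallyReal

variable {E ι : Type*} [NormedAddCommGroup E] [InnerProductSpace ℂ E] [InnerProductSpace ℝ E]

/-- The real structure need not be `InnerProductSpace.complexToReal` (on `EuclideanSpace ℂ ι`
it is the `PiLp` one); polarization shows that sharing the norm is enough. -/
theorem real_inner_eq_re_inner_complex (x y : E) : inner ℝ x y = (inner ℂ x y).re := by
  rw [real_inner_eq_norm_add_mul_self_sub_norm_mul_self_sub_norm_mul_self_div_two]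
  exact (re_inner_eq_norm_add_mul_self_sub_norm_mul_self_sub_norm_mul_self_div_two
    (𝕜 := ℂ) x y).symm

theorem real_inner_I_smul_left (x y : E) :
    inner ℝ (Complex.I • x) y = (inner ℂ x y).im := by
  simp [real_inner_eq_re_inner_complex]

theorem inner_eq_ofReal_real_inner_of_real_inner_I_smul_eq_zero {x y : E}
    (h : inner ℝ (Complex.I • x) y = 0) : inner ℂ x y = (inner ℝ x y : ℂ) :=
  Complex.ext (by simp [real_inner_eq_re_inner_complex])
    (by simpa [real_inner_I_smul_left] using h)

theorem Orthonormal.complex_of_real_inner_I_smul_eq_zero {v : ι → E} (hv : Orthonormal ℝ v)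
    (h : ∀ i j, inner ℝ (Complex.I • v i) (v j) = 0) : Orthonormal ℂ v := by
  classical
  rw [orthonormal_iff_ite] at hv ⊢
  intro i j
  rw [inner_eq_ofReal_real_inner_of_real_inner_I_smul_eq_zero (h i j), hv i j]
  split_ifs <;> simp

end TotallyReal

/-- Every surjective real-linear isometry of a totally real subspace `V` of `ℂ^n`
extends to a unitary transformation of `ℂ^n` preserving `V`. -/
theorem extend_orthogonal_of_totally_real (n : ℕ) (V : Submodule ℝ (En n))
    (hV : ∀ v ∈ V, ∀ w ∈ V, (inner ℝ (Jc v) w : ℝ) = 0)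
    (B : V →ₗ[ℝ] V)
    (hBsurj : Function.Surjective B)
    (hBiso : ∀ v : V, ‖B v‖ = ‖v‖) :
    ∃ A : En n ≃ₗᵢ[ℂ] En n,
      ⇑A '' (V : Set (En n)) = (V : Set (En n)) ∧
      ∀ v : V, A (v : En n) = (B v : En n) := by
  let b := stdOrthonormalBasis ℝ V
  let Bi : V →ₗᵢ[ℝ] V := ⟨B, hBiso⟩
  have hON (u : Fin (finrank ℝ V) → V) (hu : Orthonormal ℝ u) :
      Orthonormal ℂ (fun i => (u i : En n)) :=
    (hu.comp_linearIsometry V.subtypeₗᵢ).complex_of_real_inner_I_smul_eq_zero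
      fun i j => hV _ (u i).2 _ (u j).2
  obtain ⟨A, hA⟩ := (hON b b.orthonormal).exists_linearIsometryEquiv_apply_eq
    (hON _ (b.orthonormal.comp_linearIsometry Bi))
  have hA_comp :
      (A.toLinearEquiv.toLinearMap.restrictScalars ℝ).comp V.subtype = V.subtype.comp B :=
    b.toBasis.ext fun i => by simpa [Bi] using hA i
  have hAB (v : V) : A v = B v := LinearMap.congr_fun hA_comp v
  refine ⟨A, Set.Subset.antisymm ?_ fun y hy => ?_, hAB⟩
  · rintro _ ⟨x, hx, rfl⟩
    exact hAB ⟨x, hx⟩ ▸ (B ⟨x, hx⟩).2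
  · obtain ⟨x, hx⟩ := hBsurj ⟨y, hy⟩
    exact ⟨x, x.2, by rw [hAB, hx]⟩
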